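/- arXiv:1504.04661 — 5 statements merged into one kernel-verified Lean document; each statement's English description precedes it below -/
import Mathlib

section
/- Let E₁ be a real Banach space and let E₂, E₃ be real normed spaces. Let A : E₁ → E₂ and B : E₁ → E₃ be continuous linear maps such that B is a compact operator and there is a constant c > 0 with ‖u‖_{E₁} ≤ c (‖A u‖_{E₂} + ‖B u‖_{E₃}) for all u ∈ E₁. Then the kernel of A is finite-dimensional and the range of A is closed in E₂ (i.e., A is semi-Fredholm). -/
/-!
The estimate says that `u ↦ (A u, B u)` is antilipschitz. Hence, if `(u n)` is bounded and
`(A (u n))` is Cauchy, then along a subsequence on which `B (u n)` converges (`B` is compact)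
`(u n)` is Cauchy, so it converges. On `ker A` this makes the closed unit ball compact, so
`ker A` is finite-dimensional by Riesz's theorem. Let `M` be a closed complement of `ker A`.
A normalized sequence in `M` with `A (w n) → 0` would have a subsequence converging to a unit
vector of `M ⊓ ker A = ⊥`; so `A` is bounded below on `M`, and `range A = A '' M` is closed.
-/

open Filter Topology Metric
open scoped NNReal

theorem AntilipschitzWith.cauchySeq_of_comp {α β ι : Type*} [PseudoEMetricSpace α]
    [PseudoEMetricSpace β] [Preorder ι] {K : ℝ≥0} {f : α → β} (hf : AntilipschitzWith K f)
    (hfc : UniformContinuous f) {u : ι → α} (hu : CauchySeq (f ∘ u)) : CauchySeq u := by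
  rw [CauchySeq, ← Filter.map_map] at hu
  exact (hf.isUniformInducing hfc).cauchy_map_iff.1 hu

namespace ContinuousLinearMap

section NontriviallyNormedField

variable {𝕜 E F G : Type*} [NontriviallyNormedField 𝕜]
  [NormedAddCommGroup E] [NormedSpace 𝕜 E]
  [NormedAddCommGroup F] [NormedSpace 𝕜 F]
  [NormedAddCommGroup G] [NormedSpace 𝕜 G]
  {A : E →L[𝕜] F} {B : E →L[𝕜] G} {K : ℝ≥0}

theorem antilipschitzWith_prod_of_norm_le_mul_add {c : ℝ≥0}
    (hest : ∀ u, ‖u‖ ≤ c * (‖A u‖ + ‖B u‖)) : AntilipschitzWith (2 * c) (A.prod B) :=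
  (A.prod B).antilipschitz_of_bound fun u =>
    calc ‖u‖ ≤ c * (‖A u‖ + ‖B u‖) := hest u
      _ ≤ c * (‖A.prod B u‖ + ‖A.prod B u‖) := by
          gcongr
          exacts [_root_.norm_fst_le (A.prod B u), _root_.norm_snd_le (A.prod B u)]
      _ = ↑(2 * c) * ‖A.prod B u‖ := by push_cast; ring

theorem exists_subseq_tendsto_of_antilipschitzWith_prod [CompleteSpace E]
    (hAB : AntilipschitzWith K (A.prod B)) (hB : IsCompactOperator B) {u : ℕ → E}
    (hu : Bornology.IsBounded (Set.range u)) (hAu : CauchySeq (A ∘ u)) :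
    ∃ x, ∃ φ : ℕ → ℕ, StrictMono φ ∧ Tendsto (u ∘ φ) atTop (𝓝 x) := by
  obtain ⟨L, hL, hBL⟩ := hB.image_subset_compact_of_bounded hu
  obtain ⟨_, -, φ, hφ, hBu⟩ := hL.tendsto_subseq (x := B ∘ u) fun n => hBL ⟨u n, ⟨n, rfl⟩, rfl⟩
  have hABu : CauchySeq (A.prod B ∘ u ∘ φ) :=
    (hAu.comp_tendsto hφ.tendsto_atTop).prodMk hBu.cauchySeq
  obtain ⟨x, hx⟩ := cauchySeq_tendsto_of_complete
    (hAB.cauchySeq_of_comp (A.prod B).uniformContinuous hABu)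
  exact ⟨x, φ, hφ, hx⟩

theorem finiteDimensional_ker_of_antilipschitzWith_prod [CompleteSpace 𝕜] [CompleteSpace E]
    (hAB : AntilipschitzWith K (A.prod B)) (hB : IsCompactOperator B) :
    FiniteDimensional 𝕜 (LinearMap.ker (A : E →ₗ[𝕜] F)) := by
  refine FiniteDimensional.of_isCompact_closedBall₀ 𝕜 one_pos
    (IsSeqCompact.isCompact fun v hv => ?_)
  have hAv : A ∘ (fun n => (v n : E)) = fun _ => 0 := funext fun n => (v n).2
  obtain ⟨x, φ, hφ, hx⟩ := exists_subseq_tendsto_of_antilipschitzWith_prod hAB hB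
    (isBounded_closedBall.subset (Set.range_subset_iff.2 fun n =>
      mem_closedBall_zero_iff.2 (by simpa using hv n)))
    (hAv ▸ cauchySeq_const 0)
  have hxK : x ∈ LinearMap.ker (A : E →ₗ[𝕜] F) :=
    A.isClosed_ker.mem_of_tendsto hx (Eventually.of_forall fun n => (v (φ n)).2)
  refine ⟨⟨x, hxK⟩, ?_, φ, hφ, tendsto_subtype_rng.2 hx⟩
  simpa using isClosed_closedBall.mem_of_tendsto hx (Eventually.of_forall fun n =>
    mem_closedBall_zero_iff.2 (by simpa using hv (φ n)))

theorem isClosed_range_of_antilipschitzWith_comp_subtypeL [CompleteSpace E] {M : Submodule 𝕜 E}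
    (hM : IsClosed (M : Set E)) (hMA : M ⊔ LinearMap.ker (A : E →ₗ[𝕜] F) = ⊤)
    (hAM : AntilipschitzWith K (A ∘L M.subtypeL)) : IsClosed (Set.range A) := by
  have : CompleteSpace M := hM.completeSpace_coe
  have hrange : Set.range (A ∘L M.subtypeL) = Set.range A := by
    refine Set.Subset.antisymm (Set.range_subset_iff.2 fun m => ⟨m, rfl⟩) ?_
    rintro _ ⟨u, rfl⟩
    obtain ⟨m, hm, v, hv, rfl⟩ := Submodule.mem_sup.1 (hMA ▸ Submodule.mem_top : u ∈ _)
    exact ⟨⟨m, hm⟩, by simp [show A v = 0 from hv]⟩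
  exact hrange ▸ hAM.isClosed_range (A ∘L M.subtypeL).uniformContinuous

end NontriviallyNormedField

section RCLike

variable {𝕜 E F G : Type*} [RCLike 𝕜]
  [NormedAddCommGroup E] [NormedSpace 𝕜 E]
  [NormedAddCommGroup F] [NormedSpace 𝕜 F]
  [NormedAddCommGroup G] [NormedSpace 𝕜 G]

theorem exists_antilipschitzWith_of_not_tendsto_zero (f : E →L[𝕜] F)
    (h : ∀ w : ℕ → E, (∀ n, ‖w n‖ = 1) → ¬Tendsto (f ∘ w) atTop (𝓝 0)) :
    ∃ K, AntilipschitzWith K f := by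
  rw [antilipschitzWith_iff_exists_mul_le_norm]
  by_contra! hf
  choose x hx using fun n : ℕ => hf (1 / (n + 1)) Nat.one_div_pos_of_nat
  have hx0 (n : ℕ) : x n ≠ 0 := by
    rintro h0
    simpa [h0] using hx n
  refine h (fun n => (‖x n‖⁻¹ : 𝕜) • x n) (fun n => norm_smul_inv_norm (hx0 n)) ?_
  refine squeeze_zero_norm (fun n => ?_) tendsto_one_div_add_atTop_nhds_zero_nat
  simp only [Function.comp_apply, map_smul, norm_smul, norm_inv, RCLike.norm_ofReal, abs_norm]
  rw [inv_mul_le_iff₀ (norm_pos_iff.2 (hx0 n))]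
  exact (hx n).le.trans_eq (by ring)

theorem exists_antilipschitzWith_comp_subtypeL_of_disjoint [CompleteSpace E]
    {A : E →L[𝕜] F} {B : E →L[𝕜] G} {K : ℝ≥0}
    (hAB : AntilipschitzWith K (A.prod B)) (hB : IsCompactOperator B) {M : Submodule 𝕜 E}
    (hM : IsClosed (M : Set E)) (hMA : Disjoint M (LinearMap.ker (A : E →ₗ[𝕜] F))) :
    ∃ k, AntilipschitzWith k (A ∘L M.subtypeL) := by
  refine exists_antilipschitzWith_of_not_tendsto_zero _ fun w hw hAw => ?_
  obtain ⟨x, φ, hφ, hx⟩ := exists_subseq_tendsto_of_antilipschitzWith_prod hAB hB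
    (u := fun n => (w n : E))
    (isBounded_closedBall.subset (Set.range_subset_iff.2 fun n =>
      mem_closedBall_zero_iff.2 (hw n).le))
    hAw.cauchySeq
  have hxM : x ∈ M := hM.mem_of_tendsto hx (Eventually.of_forall fun n => (w (φ n)).2)
  have hAx : A x = 0 :=
    tendsto_nhds_unique ((A.continuous.tendsto x).comp hx) (hAw.comp hφ.tendsto_atTop)
  have hx1 : ‖x‖ = 1 :=
    tendsto_nhds_unique hx.norm (tendsto_const_nhds.congr fun n => (hw (φ n)).symm)
  exact one_ne_zero (hx1.symm.trans (norm_eq_zero.2 (Submodule.disjoint_def.1 hMA x hxM hAx)))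

end RCLike

end ContinuousLinearMap

theorem semiFredholm_of_estimate_general {E₁ E₂ E₃ : Type*}
    [NormedAddCommGroup E₁] [NormedSpace ℝ E₁] [CompleteSpace E₁]
    [NormedAddCommGroup E₂] [NormedSpace ℝ E₂]
    [NormedAddCommGroup E₃] [NormedSpace ℝ E₃]
    (A : E₁ →L[ℝ] E₂) (B : E₁ →L[ℝ] E₃)
    (hB_cpt : ∀ s : Set E₁, Bornology.IsBounded s → IsCompact (closure (B '' s)))
    (c : ℝ)
    (hest : ∀ u : E₁, ‖u‖ ≤ c * (‖A u‖ + ‖B u‖)) :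
    FiniteDimensional ℝ (LinearMap.ker (A : E₁ →ₗ[ℝ] E₂)) ∧ IsClosed (Set.range A) := by
  have hB : IsCompactOperator B :=
    (isCompactOperator_iff_isCompact_closure_image_closedBall (B : E₁ →ₗ[ℝ] E₃) one_pos).2
      (hB_cpt _ isBounded_closedBall)
  have hAB : AntilipschitzWith (2 * c.toNNReal) (A.prod B) :=
    ContinuousLinearMap.antilipschitzWith_prod_of_norm_le_mul_add fun u =>
      (hest u).trans (by gcongr; exact Real.le_coe_toNNReal c)
  have hker := ContinuousLinearMap.finiteDimensional_ker_of_antilipschitzWith_prod hAB hB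
  obtain ⟨M, hM, hcompl⟩ := (Submodule.ClosedComplemented.of_finiteDimensional
    (LinearMap.ker (A : E₁ →ₗ[ℝ] E₂))).exists_isClosed_isCompl
  obtain ⟨k, hk⟩ := ContinuousLinearMap.exists_antilipschitzWith_comp_subtypeL_of_disjoint
    hAB hB hM hcompl.symm.disjoint
  exact ⟨hker, ContinuousLinearMap.isClosed_range_of_antilipschitzWith_comp_subtypeL
    hM hcompl.symm.sup_eq_top hk⟩

/-- **Equivalence lemma (semi-Fredholm criterion).**  Let `E₁` be a real
Banach space and `E₂`, `E₃` real normed spaces.  Let `A : E₁ → E₂` and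
`B : E₁ → E₃` be continuous linear maps such that `B` is a compact operator
(maps bounded sets to relatively compact sets) and
`‖u‖ ≤ c (‖A u‖ + ‖B u‖)` for all `u` and some `c > 0`.  Then `ker A` is
finite-dimensional and the range of `A` is closed, i.e. `A` is semi-Fredholm. -/
theorem semiFredholm_of_estimate {E₁ E₂ E₃ : Type*}
    [NormedAddCommGroup E₁] [NormedSpace ℝ E₁] [CompleteSpace E₁]
    [NormedAddCommGroup E₂] [NormedSpace ℝ E₂]
    [NormedAddCommGroup E₃] [NormedSpace ℝ E₃]
    (A : E₁ →L[ℝ] E₂) (B : E₁ →L[ℝ] E₃)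
    (hB_cpt : ∀ s : Set E₁, Bornology.IsBounded s → IsCompact (closure (B '' s)))
    (c : ℝ) (hc : 0 < c)
    (hest : ∀ u : E₁, ‖u‖ ≤ c * (‖A u‖ + ‖B u‖)) :
    FiniteDimensional ℝ (LinearMap.ker (A : E₁ →ₗ[ℝ] E₂)) ∧ IsClosed (Set.range A) :=
  semiFredholm_of_estimate_general A B hB_cpt c hest
end

section
/- Let (s, p, e, q, δ, β) be a beautiful tuple of real numbers with 2 < s ≤ 4 and e ≤ 4. Then there exist p̃, q̃ ∈ (1, ∞) with 1/p̃ ∈ [1/p − (s−2)/3, 1/3) ∩ (0, 1/p) and 1/q̃ ∈ [1/q − (e−2)/3, 1/3) ∩ (1/p̃, ∞); moreover, for every such choice of p̃ and q̃, the tuple (2, p̃, 2, q̃, δ + |δ|/2, β + |δ|/2) is beautiful and is faithful to (s, p, e, q, δ, β). -/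
/-- A tuple `(s, p, e, q, δ, β)` of real numbers is *beautiful* if it satisfies
the hypotheses of the main existence theorem (Theorem 7.2 of Behzadan–Holst). -/
def IsBeautiful (s p e q δ β : ℝ) : Prop :=
  1 < p ∧ 1 < q ∧
  1 + 3 / p < s ∧
  -1 < β ∧ β ≤ δ ∧ δ < 0 ∧
  1 + 3 / q < e ∧
  s - 1 ≤ e ∧ e ≤ s ∧
  3 / q + s - 3 / p - 1 ≤ e ∧ e ≤ 3 / q + s - 3 / p ∧
  (e = s → (¬ ∃ n : ℕ, s = (n : ℝ)) → p = q) ∧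
  (2 < s → (¬ ∃ n : ℕ, s = (n : ℝ)) → e < s)

/-- A tuple `(s̃, p̃, ẽ, q̃, δ̃, β̃)` is *faithful* to `(s, p, e, q, δ, β)`. -/
def IsFaithful (s' p' e' q' δ' β' s p e q δ β : ℝ) : Prop :=
  δ' = δ + |δ| / 2 ∧ β' = β + |δ| / 2 ∧
  s' = max 2 (s - 2) ∧ e' = max 2 (e - 2) ∧
  1 / p' ≤ 1 / p ∧
  1 < e' - 3 / q' ∧ e' - 3 / q' ≤ e - 3 / q ∧
  1 < s' - 3 / p' ∧ s' - 3 / p' ≤ s - 3 / p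

/-- **Case 1 of Claim 2** in the proof of the main theorem: if
`(s, p, e, q, δ, β)` is beautiful with `2 < s ≤ 4` and `e ≤ 4`, then there
exist `p̃, q̃ ∈ (1, ∞)` with `1/p̃ ∈ [1/p − (s−2)/3, 1/3) ∩ (0, 1/p)` and
`1/q̃ ∈ [1/q − (e−2)/3, 1/3) ∩ (1/p̃, ∞)`; moreover, for every such choice,
the tuple `(2, p̃, 2, q̃, δ + |δ|/2, β + |δ|/2)` is beautiful and faithful to
`(s, p, e, q, δ, β)`. -/
theorem extremely_faithful_case_one (s p e q δ β : ℝ)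
    (hb : IsBeautiful s p e q δ β) (hs2 : 2 < s) (hs4 : s ≤ 4) (he4 : e ≤ 4) :
    (∃ p' q' : ℝ, 1 < p' ∧ 1 < q' ∧
      (1 / p - (s - 2) / 3 ≤ 1 / p' ∧ 1 / p' < 1 / 3 ∧ 0 < 1 / p' ∧ 1 / p' < 1 / p) ∧
      (1 / q - (e - 2) / 3 ≤ 1 / q' ∧ 1 / q' < 1 / 3 ∧ 1 / p' < 1 / q')) ∧
    (∀ p' q' : ℝ, 1 < p' → 1 < q' →
      (1 / p - (s - 2) / 3 ≤ 1 / p' ∧ 1 / p' < 1 / 3 ∧ 0 < 1 / p' ∧ 1 / p' < 1 / p) →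
      (1 / q - (e - 2) / 3 ≤ 1 / q' ∧ 1 / q' < 1 / 3 ∧ 1 / p' < 1 / q') →
      IsBeautiful 2 p' 2 q' (δ + |δ| / 2) (β + |δ| / 2) ∧
      IsFaithful 2 p' 2 q' (δ + |δ| / 2) (β + |δ| / 2) s p e q δ β) := by

  obtain ⟨hp, hq, hps, hβ, hβδ, hδ, hqe, h1, h2, h3, h4, h5, h6⟩ := hb
  have hp0 : (0:ℝ) < p := by linarith
  have hq0 : (0:ℝ) < q := by linarith
  have h3p : 3/p = 3*(1/p) := by rw [div_eq_mul_one_div]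
  have h3q : 3/q = 3*(1/q) := by rw [div_eq_mul_one_div]
  have hip0 : 0 < 1/p := by positivity
  have hiq0 : 0 < 1/q := by positivity
  have hipb : 1/p < (s-1)/3 := by linarith
  have hiqb : 1/q < (e-1)/3 := by linarith
  have habs : |δ| = -δ := abs_of_neg hδ
  constructor
  · set U := min (1/3 : ℝ) (1/p) with hU
    have hU0 : 0 < U := lt_min (by norm_num) hip0
    have hU1 : U ≤ 1/3 := min_le_left _ _
    have hU2 : U ≤ 1/p := min_le_right _ _
    set x := max (1/p - (s-2)/3) (U/2) with hx
    have hx0 : 0 < x := lt_of_lt_of_le (by linarith) (le_max_right _ _)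
    have hxU : x < U := by
      apply max_lt
      · apply lt_min <;> linarith
      · linarith
    have hx13 : x < 1/3 := by linarith
    have hxp : x < 1/p := by linarith
    have hxlb : 1/p - (s-2)/3 ≤ x := le_max_left _ _
    set L1 := max (1/q - (e-2)/3) x with hL1
    have hL13 : L1 < 1/3 := max_lt (by linarith) hx13
    set y := (L1 + 1/3)/2 with hy
    have hy13 : y < 1/3 := by
      have := le_max_right (1/q - (e-2)/3) x
      simp only [hy]; linarith
    have hyx : x < y := by
      have := le_max_right (1/q - (e-2)/3) x
      simp only [hy]; linarith
    have hy0 : 0 < y := lt_trans hx0 hyx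
    have hylb : 1/q - (e-2)/3 ≤ y := by
      have := le_max_left (1/q - (e-2)/3) x
      simp only [hy]; linarith
    refine ⟨1/x, 1/y, ?_, ?_, ?_, ?_⟩
    · rw [lt_div_iff₀ hx0]; linarith
    · rw [lt_div_iff₀ hy0]; linarith
    · rw [one_div_one_div]
      exact ⟨hxlb, hx13, hx0, hxp⟩
    · rw [one_div_one_div, one_div_one_div]
      exact ⟨hylb, hy13, hyx⟩
  · intro p' q' hp' hq' ⟨ha1, ha2, ha3, ha4⟩ ⟨hb1, hb2, hb3⟩
    have hp'0 : (0:ℝ) < p' := by linarith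
    have hq'0 : (0:ℝ) < q' := by linarith
    have h3p' : 3/p' = 3*(1/p') := by rw [div_eq_mul_one_div]
    have h3q' : 3/q' = 3*(1/q') := by rw [div_eq_mul_one_div]
    constructor
    · refine ⟨hp', hq', by linarith, by linarith, by linarith, by linarith,
        by linarith, by norm_num, by norm_num, by linarith, by linarith, ?_, ?_⟩
      · intro _ h
        exact absurd ⟨2, by norm_num⟩ h
      · intro h
        exact absurd h (lt_irrefl 2)
    · refine ⟨rfl, rfl, (max_eq_left (by linarith)).symm,
        (max_eq_left (by linarith)).symm, le_of_lt ha4,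
        by linarith, by linarith, by linarith, by linarith⟩
end

section
/- Let (s, p, e, q, δ, β) be a beautiful tuple of real numbers with s > 4 and e ≤ 4. Then there exists q̃ ∈ (1, ∞) with 1/q̃ ∈ [1/q − (e−2)/3, 1/3) ∩ [1/p − 2/3, 1/p); moreover, for every such q̃, setting p̃ = q̃, the tuple (s − 2, p̃, 2, q̃, δ + |δ|/2, β + |δ|/2) is beautiful and is faithful to (s, p, e, q, δ, β). -/
/-- **Case 2 of Claim 2** in the proof of the main theorem: if
`(s, p, e, q, δ, β)` is beautiful with `s > 4` and `e ≤ 4`, then there exists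
`q̃ ∈ (1, ∞)` with `1/q̃ ∈ [1/q − (e−2)/3, 1/3) ∩ [1/p − 2/3, 1/p)`; moreover,
for every such `q̃`, setting `p̃ = q̃`, the tuple
`(s − 2, p̃, 2, q̃, δ + |δ|/2, β + |δ|/2)` is beautiful and faithful to
`(s, p, e, q, δ, β)`. -/
theorem extremely_faithful_case_two (s p e q δ β : ℝ)
    (hb : IsBeautiful s p e q δ β) (hs : 4 < s) (he : e ≤ 4) :
    (∃ q' : ℝ, 1 < q' ∧
      1 / q - (e - 2) / 3 ≤ 1 / q' ∧ 1 / q' < 1 / 3 ∧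
      1 / p - 2 / 3 ≤ 1 / q' ∧ 1 / q' < 1 / p) ∧
    (∀ q' : ℝ, 1 < q' →
      (1 / q - (e - 2) / 3 ≤ 1 / q' ∧ 1 / q' < 1 / 3 ∧
       1 / p - 2 / 3 ≤ 1 / q' ∧ 1 / q' < 1 / p) →
      IsBeautiful (s - 2) q' 2 q' (δ + |δ| / 2) (β + |δ| / 2) ∧
      IsFaithful (s - 2) q' 2 q' (δ + |δ| / 2) (β + |δ| / 2) s p e q δ β) := by

  obtain ⟨hp, hq, hps, hβ, hβδ, hδ, hqe, hse, hes, hlow, hhigh, _, _⟩ := hb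
  have hp0 : (0:ℝ) < p := by linarith
  have hq0 : (0:ℝ) < q := by linarith
  have h3q : (3:ℝ)/q = 3*(1/q) := by ring
  have h3p : (3:ℝ)/p = 3*(1/p) := by ring
  have hpi : (0:ℝ) < 1/p := by positivity
  have hp1 : 1/p < 1 := by rw [div_lt_one hp0]; exact hp
  have hs5 : s ≤ 5 := by linarith
  constructor
  · -- existence
    set U : ℝ := min (1/3) (1/p) with hU
    set L : ℝ := max (1/q - (e-2)/3) (1/p - 2/3) with hL
    have hU0 : 0 < U := lt_min (by norm_num) hpi
    have hLU : L < U := by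
      apply max_lt
      · apply lt_min
        · linarith
        · linarith
      · apply lt_min
        · linarith
        · linarith
    set t : ℝ := max L (U/2) with ht
    have ht0 : 0 < t := lt_of_lt_of_le (by linarith) (le_max_right _ _)
    have htU : t < U := max_lt hLU (by linarith)
    have ht1 : t < 1 := lt_of_lt_of_le htU (le_trans (min_le_left _ _) (by norm_num))
    refine ⟨1/t, one_lt_one_div ht0 ht1, ?_, ?_, ?_, ?_⟩ <;>
      rw [one_div_one_div]
    · exact le_trans (le_trans (le_max_left _ _) (le_max_left _ _)) le_rfl
    · exact lt_of_lt_of_le htU (min_le_left _ _)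
    · exact le_trans (le_trans (le_max_right _ _) (le_max_left _ _)) le_rfl
    · exact lt_of_lt_of_le htU (min_le_right _ _)
  · intro q' hq1 ⟨c1, c2, c3, c4⟩
    have hq'0 : (0:ℝ) < q' := by linarith
    have h3q' : (3:ℝ)/q' = 3*(1/q') := by ring
    have hiq' : (0:ℝ) < 1/q' := by positivity
    have habs : |δ| = -δ := abs_of_neg hδ
    constructor
    · refine ⟨hq1, hq1, ?_, ?_, ?_, ?_, ?_, ?_, ?_, ?_, ?_, fun _ _ => rfl, fun _ _ => by linarith⟩
      · linarith
      · have := abs_nonneg δ; linarith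
      · linarith
      · rw [habs]; linarith
      · linarith
      · linarith
      · linarith
      · linarith
      · linarith
    · refine ⟨rfl, rfl, (max_eq_right (by linarith)).symm, (max_eq_left (by linarith)).symm,
        le_of_lt c4, ?_, ?_, ?_, ?_⟩
      · linarith
      · linarith
      · linarith
      · linarith
end

section
/- Let (s, p, e, q, δ, β) be a beautiful tuple of real numbers with s > 4 and e > 4. Then there exists q̃ ∈ (1, ∞) with 1/q̃ ∈ [1/q − 2/3, e/3 − 1) ∩ (0, 1/q) ∩ (1/q − 1/p, ∞); moreover, for every such q̃, defining p̃ by 1/p̃ = 1/q̃ − 1/q + 1/p, one has p̃ ∈ (1, ∞) and the tuple (s − 2, p̃, e − 2, q̃, δ + |δ|/2, β + |δ|/2) is beautiful and is faithful to (s, p, e, q, δ, β). -/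
set_option maxHeartbeats 2000000 in
/-- **Case 3 of Claim 2** in the proof of the main theorem: if
`(s, p, e, q, δ, β)` is beautiful with `s > 4` and `e > 4`, then there exists
`q̃ ∈ (1, ∞)` with `1/q̃ ∈ [1/q − 2/3, e/3 − 1) ∩ (0, 1/q) ∩ (1/q − 1/p, ∞)`;
moreover, for every such `q̃`, defining `p̃` by `1/p̃ = 1/q̃ − 1/q + 1/p`
(i.e. `p̃ = (1/q̃ − 1/q + 1/p)⁻¹`), one has `p̃ ∈ (1, ∞)` and the tuple
`(s − 2, p̃, e − 2, q̃, δ + |δ|/2, β + |δ|/2)` is beautiful and faithful to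
`(s, p, e, q, δ, β)`. -/
theorem extremely_faithful_case_three (s p e q δ β : ℝ)
    (hb : IsBeautiful s p e q δ β) (hs : 4 < s) (he : 4 < e) :
    (∃ q' : ℝ, 1 < q' ∧
      1 / q - 2 / 3 ≤ 1 / q' ∧ 1 / q' < e / 3 - 1 ∧
      0 < 1 / q' ∧ 1 / q' < 1 / q ∧ 1 / q - 1 / p < 1 / q') ∧
    (∀ q' : ℝ, 1 < q' →
      (1 / q - 2 / 3 ≤ 1 / q' ∧ 1 / q' < e / 3 - 1 ∧
       0 < 1 / q' ∧ 1 / q' < 1 / q ∧ 1 / q - 1 / p < 1 / q') →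
      1 < (1 / q' - 1 / q + 1 / p)⁻¹ ∧
      IsBeautiful (s - 2) ((1 / q' - 1 / q + 1 / p)⁻¹) (e - 2) q'
        (δ + |δ| / 2) (β + |δ| / 2) ∧
      IsFaithful (s - 2) ((1 / q' - 1 / q + 1 / p)⁻¹) (e - 2) q'
        (δ + |δ| / 2) (β + |δ| / 2) s p e q δ β) := by

  obtain ⟨hp, hq, hps, hβ, hβδ, hδ, hqe, hse1, hes, hlow, hhigh, hint, hint2⟩ := hb
  have hppos : (0:ℝ) < p := by linarith
  have hqpos : (0:ℝ) < q := by linarith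
  have hPpos : 0 < 1 / p := by positivity
  have hQpos : 0 < 1 / q := by positivity
  have hP1 : 1 / p < 1 := (div_lt_one hppos).mpr hp
  have hQ1 : 1 / q < 1 := (div_lt_one hqpos).mpr hq
  have hp3 : 3 / p = 3 * (1 / p) := by ring
  have hq3 : 3 / q = 3 * (1 / q) := by ring
  have habs : |δ| = -δ := abs_of_neg hδ
  constructor
  · -- existence
    set L0 : ℝ := max 0 (1 / q - 1 / p) with hL0
    set u : ℝ := min (e / 3 - 1) (1 / q) with hu
    set t : ℝ := max (1 / q - 2 / 3) ((L0 + u) / 2) with ht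
    have hL0u : L0 < u := by
      apply max_lt <;> apply lt_min
      · linarith
      · exact hQpos
      · linarith
      · linarith
    have htu : t < u := by
      apply max_lt
      · apply lt_min <;> linarith
      · linarith
    have htL0 : L0 < t := lt_of_lt_of_le (by linarith) (le_max_right _ _)
    have htpos : 0 < t := lt_of_le_of_lt (le_max_left _ _) htL0
    have hut : u ≤ 1 / q := min_le_right _ _
    have hue : u ≤ e / 3 - 1 := min_le_left _ _
    refine ⟨t⁻¹, ?_, ?_⟩
    · rw [one_lt_inv_iff₀]
      exact ⟨htpos, by linarith⟩
    · have h1t : 1 / t⁻¹ = t := by rw [one_div, inv_inv]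
      rw [h1t]
      refine ⟨le_max_left _ _, by linarith, htpos, by linarith, ?_⟩
      have : 1 / q - 1 / p ≤ L0 := le_max_right _ _
      linarith
  · -- universal part
    intro q' hq' ⟨h1, h2, h3, h4, h5⟩
    have hq'pos : (0:ℝ) < q' := by linarith
    have hq'3 : 3 / q' = 3 * (1 / q') := by ring
    set A : ℝ := 1 / q' - 1 / q + 1 / p with hA
    have hApos : 0 < A := by simp only [hA]; linarith
    have hA1 : A < 1 := by simp only [hA]; linarith
    have hp'1 : 1 < A⁻¹ := one_lt_inv_iff₀.mpr ⟨hApos, hA1⟩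
    have hp'one : 1 / A⁻¹ = A := by rw [one_div, inv_inv]
    have hp'3 : 3 / A⁻¹ = 3 * A := by rw [div_eq_mul_inv, inv_inv]
    have hAle : A ≤ 1 / p := by simp only [hA]; linarith
    have hnat : (¬ ∃ n : ℕ, s - 2 = (n : ℝ)) → (¬ ∃ n : ℕ, s = (n : ℝ)) := by
      intro h ⟨n, hn⟩
      apply h
      have hn5 : 5 ≤ n := by
        by_contra hc
        push_neg at hc
        interval_cases n <;> simp_all <;> linarith
      exact ⟨n - 2, by rw [hn, Nat.cast_sub (by omega)]; norm_num⟩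
    refine ⟨hp'1, ⟨hp'1, hq', ?_, ?_, ?_, ?_, ?_, ?_, ?_, ?_, ?_, ?_, ?_⟩,
      rfl, rfl, (max_eq_right (by linarith)).symm, (max_eq_right (by linarith)).symm,
      ?_, ?_, ?_, ?_, ?_⟩
    · -- 1 + 3/p' < s - 2
      rw [hp'3]; simp only [hA]; linarith
    · linarith [abs_nonneg δ]
    · linarith
    · rw [habs]; linarith
    · -- 1 + 3/q' < e - 2
      linarith
    · linarith
    · linarith
    · -- 3/q' + (s-2) - 3/p' - 1 ≤ e - 2
      rw [hp'3]; simp only [hA]; linarith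
    · rw [hp'3]; simp only [hA]; linarith
    · -- integer condition 1
      intro hes2 hns
      have hpq : p = q := hint (by linarith) (hnat hns)
      have : A = 1 / q' := by simp only [hA, hpq]; ring
      rw [this, one_div, inv_inv]
    · -- integer condition 2
      intro _ hns
      have := hint2 (by linarith) (hnat hns)
      linarith
    · rw [hp'one]; exact hAle
    · linarith
    · linarith
    · rw [hp'3]; simp only [hA]; linarith
    · rw [hp'3]; simp only [hA]; linarith
end

section
/- Let μ > 0 and let ψ₋ ≤ ψ₊ be real numbers with ψ₋ > −μ, and let a_R, a_τ, a_ρ, a_W be nonnegative real numbers. Define the shift a_s = a_R + 3·a_ρ·(μ + ψ₊)²/(μ + ψ₋)⁶ + 5·a_τ·(μ + ψ₊)⁴ + 7·a_W·(μ + ψ₊)⁶/(μ + ψ₋)¹⁴, and for real x > −μ set g(x) = a_τ·(μ + x)⁵ + a_R·(μ + x) − a_ρ·(μ + x)⁻³ − a_W·(μ + x)⁻⁷ − a_s·x. Then g is monotone decreasing on [ψ₋, ψ₊]: for all ψ₁, ψ₂ with ψ₋ ≤ ψ₁ ≤ ψ₂ ≤ ψ₊, one has g(ψ₂) ≤ g(ψ₁).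 -/
set_option maxHeartbeats 1000000

private lemma aux_key_ineq (m u v p aR aτ aρ aW : ℝ)
    (hm : 0 < m) (hmu : m ≤ u) (huv : u ≤ v) (hvp : v ≤ p)
    (hR : 0 ≤ aR) (hτ : 0 ≤ aτ) (hρ : 0 ≤ aρ) (hW : 0 ≤ aW) :
    (aτ * v ^ 5 + aR * v - aρ * (v ^ 3)⁻¹ - aW * (v ^ 7)⁻¹)
      - (aτ * u ^ 5 + aR * u - aρ * (u ^ 3)⁻¹ - aW * (u ^ 7)⁻¹)
    ≤ (aR + 3 * aρ * p ^ 2 / m ^ 6 + 5 * aτ * p ^ 4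
        + 7 * aW * p ^ 6 / m ^ 14) * (v - u) := by
  have hu : (0:ℝ) < u := lt_of_lt_of_le hm hmu
  have hv : (0:ℝ) < v := lt_of_lt_of_le hu huv
  have hp : (0:ℝ) < p := lt_of_lt_of_le hv hvp
  have hmv : m ≤ v := le_trans hmu huv
  have hup : u ≤ p := le_trans huv hvp
  have hsub : (0:ℝ) ≤ v - u := by linarith
  have key5 : v ^ 5 - u ^ 5 ≤ 5 * p ^ 4 * (v - u) := by
    have h : v ^ 5 - u ^ 5 = (v - u) *
        (v ^ 4 + v ^ 3 * u + v ^ 2 * u ^ 2 + v * u ^ 3 + u ^ 4) := by ring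
    rw [h]
    have hb : v ^ 4 + v ^ 3 * u + v ^ 2 * u ^ 2 + v * u ^ 3 + u ^ 4
        ≤ p ^ 4 + p ^ 3 * p + p ^ 2 * p ^ 2 + p * p ^ 3 + p ^ 4 := by
      gcongr <;> first | exact hu.le | exact hv.le | exact hup | exact hvp
    linarith [mul_le_mul_of_nonneg_left hb hsub]
  have key3 : v ^ 3 - u ^ 3 ≤ 3 * p ^ 2 * (v - u) := by
    have h : v ^ 3 - u ^ 3 = (v - u) * (v ^ 2 + v * u + u ^ 2) := by ring
    rw [h]
    have hb : v ^ 2 + v * u + u ^ 2 ≤ p ^ 2 + p * p + p ^ 2 := by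
      gcongr <;> first | exact hu.le | exact hv.le | exact hup | exact hvp
    linarith [mul_le_mul_of_nonneg_left hb hsub]
  have key7 : v ^ 7 - u ^ 7 ≤ 7 * p ^ 6 * (v - u) := by
    have h : v ^ 7 - u ^ 7 = (v - u) * (v ^ 6 + v ^ 5 * u + v ^ 4 * u ^ 2
        + v ^ 3 * u ^ 3 + v ^ 2 * u ^ 4 + v * u ^ 5 + u ^ 6) := by ring
    rw [h]
    have hb : v ^ 6 + v ^ 5 * u + v ^ 4 * u ^ 2 + v ^ 3 * u ^ 3 + v ^ 2 * u ^ 4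
        + v * u ^ 5 + u ^ 6 ≤ p ^ 6 + p ^ 5 * p + p ^ 4 * p ^ 2 + p ^ 3 * p ^ 3
        + p ^ 2 * p ^ 4 + p * p ^ 5 + p ^ 6 := by
      gcongr <;> first | exact hu.le | exact hv.le | exact hup | exact hvp
    linarith [mul_le_mul_of_nonneg_left hb hsub]
  have hden3 : m ^ 6 ≤ u ^ 3 * v ^ 3 := by
    calc m ^ 6 = m ^ 3 * m ^ 3 := by ring
    _ ≤ u ^ 3 * v ^ 3 := by gcongr <;> first | exact hm.le | exact hmu | exact hmv
  have hden7 : m ^ 14 ≤ u ^ 7 * v ^ 7 := by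
    calc m ^ 14 = m ^ 7 * m ^ 7 := by ring
    _ ≤ u ^ 7 * v ^ 7 := by gcongr <;> first | exact hm.le | exact hmu | exact hmv
  have h5 : aτ * v ^ 5 - aτ * u ^ 5 ≤ 5 * aτ * p ^ 4 * (v - u) := by
    nlinarith [mul_le_mul_of_nonneg_left key5 hτ]
  have h3 : aρ * (u ^ 3)⁻¹ - aρ * (v ^ 3)⁻¹ ≤ 3 * aρ * p ^ 2 / m ^ 6 * (v - u) := by
    have e : (u ^ 3)⁻¹ - (v ^ 3)⁻¹ = (v ^ 3 - u ^ 3) / (u ^ 3 * v ^ 3) := by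
      field_simp
    have hd : (v ^ 3 - u ^ 3) / (u ^ 3 * v ^ 3) ≤ 3 * p ^ 2 * (v - u) / m ^ 6 :=
      div_le_div₀ (by positivity) key3 (by positivity) hden3
    calc aρ * (u ^ 3)⁻¹ - aρ * (v ^ 3)⁻¹
        = aρ * ((u ^ 3)⁻¹ - (v ^ 3)⁻¹) := by ring
      _ = aρ * ((v ^ 3 - u ^ 3) / (u ^ 3 * v ^ 3)) := by rw [e]
      _ ≤ aρ * (3 * p ^ 2 * (v - u) / m ^ 6) := mul_le_mul_of_nonneg_left hd hρ
      _ = 3 * aρ * p ^ 2 / m ^ 6 * (v - u) := by ring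
  have h7 : aW * (u ^ 7)⁻¹ - aW * (v ^ 7)⁻¹ ≤ 7 * aW * p ^ 6 / m ^ 14 * (v - u) := by
    have e : (u ^ 7)⁻¹ - (v ^ 7)⁻¹ = (v ^ 7 - u ^ 7) / (u ^ 7 * v ^ 7) := by
      field_simp
    have hd : (v ^ 7 - u ^ 7) / (u ^ 7 * v ^ 7) ≤ 7 * p ^ 6 * (v - u) / m ^ 14 :=
      div_le_div₀ (by positivity) key7 (by positivity) hden7
    calc aW * (u ^ 7)⁻¹ - aW * (v ^ 7)⁻¹
        = aW * ((u ^ 7)⁻¹ - (v ^ 7)⁻¹) := by ring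
      _ = aW * ((v ^ 7 - u ^ 7) / (u ^ 7 * v ^ 7)) := by rw [e]
      _ ≤ aW * (7 * p ^ 6 * (v - u) / m ^ 14) := mul_le_mul_of_nonneg_left hd hW
      _ = 7 * aW * p ^ 6 / m ^ 14 * (v - u) := by ring
  have hRl : aR * v - aR * u ≤ aR * (v - u) := by ring_nf; rfl
  have hsplit : (aR + 3 * aρ * p ^ 2 / m ^ 6 + 5 * aτ * p ^ 4
      + 7 * aW * p ^ 6 / m ^ 14) * (v - u)
      = aR * (v - u) + 3 * aρ * p ^ 2 / m ^ 6 * (v - u)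
        + 5 * aτ * p ^ 4 * (v - u) + 7 * aW * p ^ 6 / m ^ 14 * (v - u) := by ring
  rw [hsplit]
  linarith [h5, h3, h7, hRl]

/-- **Monotonicity of the shifted Hamiltonian nonlinearity** (pointwise version
of Lemma 5.2 in Behzadan–Holst).  Let `μ > 0`, let `−μ < ψ₋ ≤ ψ₊`, let
`a_R, a_τ, a_ρ, a_W ≥ 0`, define the shift
`a_s = a_R + 3 a_ρ (μ+ψ₊)²/(μ+ψ₋)⁶ + 5 a_τ (μ+ψ₊)⁴ + 7 a_W (μ+ψ₊)⁶/(μ+ψ₋)¹⁴`,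
and for `x > −μ` set
`g(x) = a_τ (μ+x)⁵ + a_R (μ+x) − a_ρ (μ+x)⁻³ − a_W (μ+x)⁻⁷ − a_s x`.
Then `g` is monotone decreasing on `[ψ₋, ψ₊]`. -/
theorem shifted_nonlinearity_antitone
    (μ ψm ψp aR aτ aρ aW aS : ℝ) (g : ℝ → ℝ)
    (hμ : 0 < μ) (hψm : -μ < ψm) (hψ : ψm ≤ ψp)
    (hR : 0 ≤ aR) (hτ : 0 ≤ aτ) (hρ : 0 ≤ aρ) (hW : 0 ≤ aW)
    (haS : aS = aR + 3 * aρ * (μ + ψp) ^ 2 / (μ + ψm) ^ 6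
      + 5 * aτ * (μ + ψp) ^ 4 + 7 * aW * (μ + ψp) ^ 6 / (μ + ψm) ^ 14)
    (hg : ∀ x : ℝ, -μ < x →
      g x = aτ * (μ + x) ^ 5 + aR * (μ + x)
        - aρ * ((μ + x) ^ 3)⁻¹ - aW * ((μ + x) ^ 7)⁻¹ - aS * x) :
    ∀ ψ₁ ψ₂ : ℝ, ψm ≤ ψ₁ → ψ₁ ≤ ψ₂ → ψ₂ ≤ ψp → g ψ₂ ≤ g ψ₁ := by
  intro ψ₁ ψ₂ h1 h12 h2
  have hm : (0:ℝ) < μ + ψm := by linarith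
  rw [hg ψ₁ (by linarith), hg ψ₂ (by linarith)]
  have key := aux_key_ineq (μ + ψm) (μ + ψ₁) (μ + ψ₂) (μ + ψp) aR aτ aρ aW
    hm (by linarith) (by linarith) (by linarith) hR hτ hρ hW
  have hdiff : (μ + ψ₂) - (μ + ψ₁) = ψ₂ - ψ₁ := by ring
  rw [hdiff] at key
  rw [haS]
  nlinarith [key]
end
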